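/- (Replacement theorem) Let (V, #, ∗) be a strongly left distributive hypervector space over a hyperfield (F, ⊕, ·). Suppose {α₁, α₂, ..., αₙ} generates V, i.e., V = HL(α₁, ..., αₙ), and {β₁, β₂, ..., βₘ} ⊆ V is linearly independent. Then m ≤ n, and V is generated by a set of the form {β₁, ..., βₘ, α_{i₁}, α_{i₂}, ..., α_{i_{n−m}}} for suitable indices i₁, ..., i_{n−m} ∈ {1, ..., n}. -/

import Mathlib

universe u v

/-- A hyperfield: `(F, ⊕, ·)` where `(F, ⊕)` is a commutative hypergroup with zero
element `zero` (each `a` having a unique additive inverse `neg a`, and satisfying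
reversibility), and `·` is an associative commutative multiplication distributing
over `⊕` from both sides, with `a·0 = 0·a = 0`, an identity `one` and multiplicative
inverses for nonzero elements. -/
structure Hyperfield (F : Type u) where
  add : F → F → Set F
  add_nonempty : ∀ a b, (add a b).Nonempty
  add_comm : ∀ a b, add a b = add b a
  add_assoc : ∀ a b c, (⋃ t ∈ add b c, add a t) = ⋃ t ∈ add a b, add t c
  zero : F
  neg : F → F
  neg_spec : ∀ a, zero ∈ add a (neg a) ∧ zero ∈ add (neg a) a
  neg_unique : ∀ a b, zero ∈ add a b → zero ∈ add b a → b = neg a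
  reversible : ∀ a b c, a ∈ add b c → b ∈ add a (neg c)
  mul : F → F → F
  mul_assoc : ∀ a b c, mul (mul a b) c = mul a (mul b c)
  left_distrib : ∀ a b c, (mul a) '' (add b c) = add (mul a b) (mul a c)
  right_distrib : ∀ a b c, (fun t => mul t a) '' (add b c) = add (mul b a) (mul c a)
  mul_zero : ∀ a, mul a zero = zero
  zero_mul : ∀ a, mul zero a = zero
  one : F
  mul_one : ∀ a, mul a one = a
  one_ne_zero : one ≠ zero
  mul_comm : ∀ a b, mul a b = mul b a
  exists_inv : ∀ a, a ≠ zero → ∃ b, mul a b = one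

/-- A hypervector space `(V, #, ∗)` over a hyperfield `K` on `F`:
`(V, #)` is a commutative hypergroup with zero vector `vzero`, and
`∗ : F × V → P*(V)` satisfies (i) `a ∗ (α # β) ⊆ a∗α # a∗β`,
(ii) `(a ⊕ b) ∗ α ⊆ a∗α # b∗α`, (iii) `(a·b) ∗ α = a ∗ (b ∗ α)`,
(iv) `1 ∗ α = {α}` and `0 ∗ α = {θ}`. -/
structure HypervectorSpace (F : Type u) (V : Type v) (K : Hyperfield F) where
  vadd : V → V → Set V
  vadd_nonempty : ∀ x y, (vadd x y).Nonempty
  vadd_comm : ∀ x y, vadd x y = vadd y x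
  vadd_assoc : ∀ x y z, (⋃ t ∈ vadd y z, vadd x t) = ⋃ t ∈ vadd x y, vadd t z
  vzero : V
  vneg : V → V
  vneg_spec : ∀ x, vzero ∈ vadd x (vneg x) ∧ vzero ∈ vadd (vneg x) x
  vneg_unique : ∀ x y, vzero ∈ vadd x y → vzero ∈ vadd y x → y = vneg x
  vreversible : ∀ x y z, x ∈ vadd y z → y ∈ vadd x (vneg z)
  smul : F → V → Set V
  smul_nonempty : ∀ a x, (smul a x).Nonempty
  smul_vadd : ∀ a x y, (⋃ t ∈ vadd x y, smul a t) ⊆ ⋃ u ∈ smul a x, ⋃ w ∈ smul a y, vadd u w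
  add_smul : ∀ a b x, (⋃ t ∈ K.add a b, smul t x) ⊆ ⋃ u ∈ smul a x, ⋃ w ∈ smul b x, vadd u w
  mul_smul : ∀ a b x, smul (K.mul a b) x = ⋃ t ∈ smul b x, smul a t
  one_smul : ∀ x, smul K.one x = {x}
  zero_smul : ∀ x, smul K.zero x = {vzero}

namespace HypervectorSpace

variable {F : Type u} {V : Type v} {K : Hyperfield F}

/-- The hyperoperation `#` extended to subsets: `A # B = ⋃_{a ∈ A, b ∈ B} a # b`. -/
def setVadd (H : HypervectorSpace F V K) (A B : Set V) : Set V :=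
  ⋃ a ∈ A, ⋃ b ∈ B, H.vadd a b

/-- A subset `W` of a hypervector space is a hypersubspace if it is closed under `#`
and `∗`, contains the zero vector, and contains additive inverses. -/
def IsHypersubspace (H : HypervectorSpace F V K) (W : Set V) : Prop :=
  (∀ α ∈ W, ∀ β ∈ W, H.vadd α β ⊆ W) ∧
  (∀ a : F, ∀ α ∈ W, H.smul a α ⊆ W) ∧
  H.vzero ∈ W ∧
  (∀ α ∈ W, H.vneg α ∈ W)

/-- Iterated hyperoperation `A₁ # A₂ # ... # Aₙ` on a list of subsets
(by convention the empty hypersum is `{θ}`). -/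
def hsum (H : HypervectorSpace F V K) : List (Set V) → Set V
  | [] => {H.vzero}
  | [A] => A
  | A :: B :: rest => H.setVadd A (HypervectorSpace.hsum H (B :: rest))

/-- The linear combination set `a₁∗α₁ # a₂∗α₂ # ... # aₙ∗αₙ`. -/
def lincomb (H : HypervectorSpace F V K) {n : ℕ} (a : Fin n → F) (α : Fin n → V) : Set V :=
  H.hsum (List.ofFn fun i => H.smul (a i) (α i))

/-- The hyperlinear span `HL(α₁, ..., αₙ) = ⋃ { a₁∗α₁ # ... # aₙ∗αₙ : a₁, ..., aₙ ∈ F }`. -/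
def HL (H : HypervectorSpace F V K) {n : ℕ} (α : Fin n → V) : Set V :=
  ⋃ a : Fin n → F, H.lincomb a α

/-- The family `α₁, ..., αₙ` is linearly dependent if `θ ∈ a₁∗α₁ # ... # aₙ∗αₙ`
for some scalars `a₁, ..., aₙ`, not all zero. -/
def LinDep (H : HypervectorSpace F V K) {n : ℕ} (α : Fin n → V) : Prop :=
  ∃ a : Fin n → F, (∃ i, a i ≠ K.zero) ∧ H.vzero ∈ H.lincomb a α

/-- Strongly left distributive: equality `(a ⊕ b) ∗ α = a∗α # b∗α`. -/
def StronglyLeftDistrib (H : HypervectorSpace F V K) : Prop :=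
  ∀ (a b : F) (x : V),
    (⋃ t ∈ K.add a b, H.smul t x) = ⋃ u ∈ H.smul a x, ⋃ w ∈ H.smul b x, H.vadd u w

/-- The set of all finite linear combinations of elements of `S`. -/
def HLSet (H : HypervectorSpace F V K) (S : Set V) : Set V :=
  ⋃ n : ℕ, ⋃ β : Fin n → V, ⋃ (_ : ∀ i, β i ∈ S), H.HL β

/-- A set `S` is linearly independent if every finite family of distinct elements
of `S` is linearly independent. -/
def LinIndepSet (H : HypervectorSpace F V K) (S : Set V) : Prop :=
  ∀ (n : ℕ) (β : Fin n → V), Function.Injective β → (∀ i, β i ∈ S) → ¬ H.LinDep β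

/-- `S` is a basis of the hypersubspace `U`: `S ⊆ U`, `S` is linearly independent,
and every element of `U` is a finite linear combination of elements of `S`. -/
def IsBasisOf (H : HypervectorSpace F V K) (S U : Set V) : Prop :=
  S ⊆ U ∧ H.LinIndepSet S ∧ U ⊆ H.HLSet S

end HypervectorSpace

/-! The span `HL δ` of a finite family is a hypersubspace; closure under `#` is where strong
left distributivity enters, since `b∗δᵢ # c∗δᵢ` has to collapse to `(b ⊕ c)∗δᵢ`, and it also gives
`-x ∈ (-1)∗x`. Inside a hypersubspace the classical exchange argument goes through: if
`x ∈ c₁∗δ₁ # ... # cₖ∗δₖ` with `cⱼ ≠ 0`, reversibility of `#` and `cⱼ⁻¹` recover `δⱼ` from `x` and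
the other `δᵢ`. The `βᵢ` are then inserted one at a time, each replacing one of the remaining
`α`s; some `α` carries a nonzero coefficient, since otherwise the new `β` would lie in the span
of the other `β`s. -/

namespace Hyperfield

variable {F : Type u} (K : Hyperfield F)

theorem neg_neg (a : F) : K.neg (K.neg a) = a :=
  (K.neg_unique (K.neg a) a (K.neg_spec a).2 (K.neg_spec a).1).symm

theorem zero_mem_add_zero_zero : K.zero ∈ K.add K.zero K.zero := by
  obtain ⟨t, ht⟩ := K.add_nonempty K.zero K.zero
  have ht' := ht
  -- `0 ⊕ 0 = 0·0 ⊕ 0·0 = 0·(0 ⊕ 0)` consists of multiples of `0`.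
  rw [← K.mul_zero K.zero, ← K.left_distrib] at ht'
  obtain ⟨s, -, hs⟩ := ht'
  rwa [← hs, K.zero_mul] at ht

theorem neg_zero : K.neg K.zero = K.zero :=
  (K.neg_unique _ _ K.zero_mem_add_zero_zero K.zero_mem_add_zero_zero).symm

theorem neg_one_ne_zero : K.neg K.one ≠ K.zero := fun h =>
  K.one_ne_zero (by rw [← K.neg_neg K.one, h, K.neg_zero])

end Hyperfield

namespace HypervectorSpace

variable {F : Type u} {V : Type v} {K : Hyperfield F} (H : HypervectorSpace F V K)

theorem vneg_vneg (x : V) : H.vneg (H.vneg x) = x :=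
  (H.vneg_unique (H.vneg x) x (H.vneg_spec x).2 (H.vneg_spec x).1).symm

theorem vadd_vzero (x : V) : H.vadd x H.vzero = {x} := by
  ext y
  constructor
  · intro hy
    rw [H.vadd_comm] at hy
    have h : H.vzero ∈ H.vadd y (H.vneg x) := H.vreversible y H.vzero x hy
    have hy' := H.vneg_unique _ _ (by rwa [H.vadd_comm]) h
    rwa [H.vneg_vneg] at hy'
  · rintro rfl
    simpa [H.vneg_vneg, H.vadd_comm] using H.vreversible _ _ _ (H.vneg_spec y).1

theorem smul_vzero (a : F) : H.smul a H.vzero = {H.vzero} := by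
  simpa [K.mul_zero, H.zero_smul] using (H.mul_smul a K.zero H.vzero).symm

theorem vneg_mem_smul_neg_one (hsld : H.StronglyLeftDistrib) (x : V) :
    H.vneg x ∈ H.smul (K.neg K.one) x := by
  have h : H.vzero ∈ ⋃ t ∈ K.add K.one (K.neg K.one), H.smul t x :=
    Set.mem_biUnion (K.neg_spec K.one).1 (by rw [H.zero_smul]; rfl)
  rw [hsld, H.one_smul] at h
  simp only [Set.mem_iUnion, Set.mem_singleton_iff, exists_prop, exists_eq_left] at h
  obtain ⟨w, hw, hθ⟩ := h
  rwa [← H.vneg_unique x w hθ (by rwa [H.vadd_comm])]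

theorem exists_mem_smul_of_mem_smul {a : F} (ha : a ≠ K.zero) {x u : V}
    (hu : u ∈ H.smul a x) : ∃ b, x ∈ H.smul b u := by
  obtain ⟨b, hb⟩ := K.exists_inv a ha
  obtain ⟨w, hw⟩ := H.smul_nonempty b u
  have hw' : w ∈ H.smul (K.mul b a) x := by
    rw [H.mul_smul]; exact Set.mem_biUnion hu hw
  rw [K.mul_comm, hb, H.one_smul] at hw'
  exact ⟨b, hw' ▸ hw⟩

theorem mem_setVadd {A B : Set V} {z : V} :
    z ∈ H.setVadd A B ↔ ∃ a ∈ A, ∃ b ∈ B, z ∈ H.vadd a b := by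
  simp [setVadd]

theorem setVadd_comm (A B : Set V) : H.setVadd A B = H.setVadd B A := by
  ext z
  simp only [mem_setVadd]
  constructor <;>
  · rintro ⟨a, ha, b, hb, hz⟩
    exact ⟨b, hb, a, ha, by rwa [H.vadd_comm]⟩

theorem setVadd_assoc (A B C : Set V) :
    H.setVadd (H.setVadd A B) C = H.setVadd A (H.setVadd B C) := by
  ext z
  simp only [mem_setVadd]
  constructor
  · rintro ⟨t, ⟨a, ha, b, hb, ht⟩, c, hc, hz⟩
    have hz' : z ∈ ⋃ s ∈ H.vadd b c, H.vadd a s := by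
      rw [H.vadd_assoc]; exact Set.mem_biUnion ht hz
    obtain ⟨s, hs, hz⟩ := Set.mem_iUnion₂.1 hz'
    exact ⟨a, ha, s, ⟨b, hb, c, hc, hs⟩, hz⟩
  · rintro ⟨a, ha, s, ⟨b, hb, c, hc, hs⟩, hz⟩
    have hz' : z ∈ ⋃ t ∈ H.vadd a b, H.vadd t c := by
      rw [← H.vadd_assoc]; exact Set.mem_biUnion hs hz
    obtain ⟨t, ht, hz⟩ := Set.mem_iUnion₂.1 hz'
    exact ⟨t, ⟨a, ha, b, hb, ht⟩, c, hc, hz⟩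

theorem setVadd_left_comm (A B C : Set V) :
    H.setVadd A (H.setVadd B C) = H.setVadd B (H.setVadd A C) := by
  rw [← setVadd_assoc, H.setVadd_comm A B, setVadd_assoc]

theorem setVadd_setVadd_setVadd_comm (A B C D : Set V) :
    H.setVadd (H.setVadd A B) (H.setVadd C D) = H.setVadd (H.setVadd A C) (H.setVadd B D) := by
  rw [setVadd_assoc, H.setVadd_left_comm B C D, ← setVadd_assoc]

theorem setVadd_singleton_vzero (A : Set V) : H.setVadd A {H.vzero} = A := by
  simp [setVadd, vadd_vzero]

theorem singleton_vzero_setVadd (A : Set V) : H.setVadd {H.vzero} A = A := by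
  rw [setVadd_comm, setVadd_singleton_vzero]

theorem hsum_cons (A : Set V) (l : List (Set V)) :
    H.hsum (A :: l) = H.setVadd A (H.hsum l) := by
  cases l with
  | nil => exact (H.setVadd_singleton_vzero A).symm
  | cons B t => rfl

theorem lincomb_fin_zero (a : Fin 0 → F) (δ : Fin 0 → V) : H.lincomb a δ = {H.vzero} := rfl

theorem lincomb_succ {k : ℕ} (a : Fin (k + 1) → F) (δ : Fin (k + 1) → V) :
    H.lincomb a δ = H.setVadd (H.smul (a 0) (δ 0)) (H.lincomb (Fin.tail a) (Fin.tail δ)) := by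
  rw [lincomb, List.ofFn_succ, hsum_cons]
  rfl

theorem lincomb_cons {k : ℕ} (e : F) (d : Fin k → F) (δ : Fin (k + 1) → V) :
    H.lincomb (Fin.cons e d) δ = H.setVadd (H.smul e (δ 0)) (H.lincomb d (Fin.tail δ)) := by
  rw [lincomb_succ, Fin.cons_zero, Fin.tail_cons]

theorem lincomb_zero {k : ℕ} (δ : Fin k → V) : H.lincomb (fun _ => K.zero) δ = {H.vzero} := by
  induction k with
  | zero => rfl
  | succ k ih => rw [lincomb_succ, H.zero_smul, Fin.tail_def, ih, setVadd_singleton_vzero]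

theorem lincomb_eq_setVadd_update {k : ℕ} (c : Fin k → F) (δ : Fin k → V) (j : Fin k) :
    H.lincomb c δ =
      H.setVadd (H.smul (c j) (δ j)) (H.lincomb (Function.update c j K.zero) δ) := by
  induction k with
  | zero => exact j.elim0
  | succ k ih =>
    induction j using Fin.cases with
    | zero =>
      rw [H.lincomb_succ (Function.update c 0 K.zero), Fin.tail_update_zero,
        Function.update_self, H.zero_smul, singleton_vzero_setVadd, lincomb_succ]
    | succ i =>
      rw [lincomb_succ, ih (Fin.tail c) (Fin.tail δ) i,
        H.lincomb_succ (Function.update c i.succ K.zero), Fin.tail_update_succ,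
        Function.update_of_ne (Fin.succ_ne_zero i).symm, setVadd_left_comm]
      rfl

theorem lincomb_subset {k : ℕ} {W : Set V} (hW : H.IsHypersubspace W) {a : Fin k → F}
    {δ : Fin k → V} (h : ∀ i, H.smul (a i) (δ i) ⊆ W) : H.lincomb a δ ⊆ W := by
  induction k with
  | zero => exact Set.singleton_subset_iff.2 hW.2.2.1
  | succ k ih =>
    rw [lincomb_succ]
    intro z hz
    obtain ⟨p, hp, q, hq, hz⟩ := H.mem_setVadd.1 hz
    exact hW.1 p (h 0 hp) q (ih (fun i => h i.succ) hq) hz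

theorem mem_HL_iff {k : ℕ} {δ : Fin k → V} {x : V} :
    x ∈ H.HL δ ↔ ∃ a : Fin k → F, x ∈ H.lincomb a δ := by
  simp [HL]

theorem lincomb_subset_HL {k : ℕ} (a : Fin k → F) (δ : Fin k → V) : H.lincomb a δ ⊆ H.HL δ :=
  Set.subset_iUnion (fun a => H.lincomb a δ) a

theorem vzero_mem_HL {k : ℕ} (δ : Fin k → V) : H.vzero ∈ H.HL δ :=
  H.lincomb_subset_HL _ δ (by rw [lincomb_zero]; rfl)

theorem mem_HL {k : ℕ} (δ : Fin k → V) (i : Fin k) : δ i ∈ H.HL δ := by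
  refine H.lincomb_subset_HL (Function.update (fun _ => K.zero) i K.one) δ ?_
  rw [H.lincomb_eq_setVadd_update _ _ i, Function.update_self, Function.update_idem,
    Function.update_eq_self i (fun _ => K.zero), H.one_smul, lincomb_zero,
    setVadd_singleton_vzero]
  rfl

theorem smul_lincomb_subset {k : ℕ} (a : F) (b : Fin k → F) (δ : Fin k → V) :
    ⋃ x ∈ H.lincomb b δ, H.smul a x ⊆ H.lincomb (fun i => K.mul a (b i)) δ := by
  induction k with
  | zero => simp [lincomb_fin_zero, smul_vzero]
  | succ k ih =>
    simp only [Set.iUnion₂_subset_iff, lincomb_succ H (fun i => K.mul a (b i))]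
    intro x hx z hz
    rw [lincomb_succ] at hx
    obtain ⟨u, hu, s, hs, hx⟩ := H.mem_setVadd.1 hx
    obtain ⟨p, hp, q, hq, hz⟩ := H.mem_setVadd.1 (H.smul_vadd a u s (Set.mem_biUnion hx hz))
    refine H.mem_setVadd.2 ⟨p, ?_, q, ih (Fin.tail b) (Fin.tail δ) (Set.mem_biUnion hs hq), hz⟩
    rw [H.mul_smul]
    exact Set.mem_biUnion hu hp

theorem setVadd_lincomb_subset_HL (hsld : H.StronglyLeftDistrib) {k : ℕ} (b c : Fin k → F)
    (δ : Fin k → V) : H.setVadd (H.lincomb b δ) (H.lincomb c δ) ⊆ H.HL δ := by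
  induction k with
  | zero =>
    rw [lincomb_fin_zero, lincomb_fin_zero, setVadd_singleton_vzero]
    exact Set.singleton_subset_iff.2 (H.vzero_mem_HL δ)
  | succ k ih =>
    rw [lincomb_succ, lincomb_succ, setVadd_setVadd_setVadd_comm]
    intro z hz
    obtain ⟨p, hp, q, hq, hz⟩ := H.mem_setVadd.1 hz
    rw [setVadd, ← hsld] at hp
    obtain ⟨e, he, hp⟩ := Set.mem_iUnion₂.1 hp
    obtain ⟨d, hq⟩ := H.mem_HL_iff.1 (ih (Fin.tail b) (Fin.tail c) (Fin.tail δ) hq)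
    refine H.lincomb_subset_HL (Fin.cons e d) δ ?_
    rw [lincomb_cons]
    exact H.mem_setVadd.2 ⟨p, hp, q, hq, hz⟩

theorem isHypersubspace_HL (hsld : H.StronglyLeftDistrib) {k : ℕ} (δ : Fin k → V) :
    H.IsHypersubspace (H.HL δ) := by
  have smul_mem : ∀ (a : F), ∀ x ∈ H.HL δ, H.smul a x ⊆ H.HL δ := by
    intro a x hx
    obtain ⟨b, hb⟩ := H.mem_HL_iff.1 hx
    exact ((Set.subset_biUnion_of_mem hb).trans (H.smul_lincomb_subset a b δ)).trans
      (H.lincomb_subset_HL _ δ)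
  refine ⟨?_, smul_mem, H.vzero_mem_HL δ, fun x hx => ?_⟩
  · intro x hx y hy
    obtain ⟨b, hb⟩ := H.mem_HL_iff.1 hx
    obtain ⟨c, hc⟩ := H.mem_HL_iff.1 hy
    exact fun z hz => H.setVadd_lincomb_subset_HL hsld b c δ (H.mem_setVadd.2 ⟨x, hb, y, hc, hz⟩)
  · exact smul_mem _ x hx (H.vneg_mem_smul_neg_one hsld x)

theorem HL_subset {k : ℕ} {δ : Fin k → V} {W : Set V} (hW : H.IsHypersubspace W)
    (hδ : ∀ i, δ i ∈ W) : H.HL δ ⊆ W :=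
  Set.iUnion_subset fun a => H.lincomb_subset hW fun i => hW.2.1 (a i) (δ i) (hδ i)

theorem mem_of_mem_lincomb {W : Set V} (hW : H.IsHypersubspace W) {k : ℕ} {c : Fin k → F}
    {δ : Fin k → V} {x : V} (hx : x ∈ H.lincomb c δ) (hxW : x ∈ W) {j : Fin k}
    (hcj : c j ≠ K.zero) (hδ : ∀ i ≠ j, δ i ∈ W) : δ j ∈ W := by
  rw [H.lincomb_eq_setVadd_update c δ j] at hx
  obtain ⟨u, hu, r, hr, hx⟩ := H.mem_setVadd.1 hx
  have hrW : r ∈ W := by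
    refine H.lincomb_subset hW (fun i => ?_) hr
    rcases eq_or_ne i j with rfl | hij
    · rw [Function.update_self, H.zero_smul]
      exact Set.singleton_subset_iff.2 hW.2.2.1
    · rw [Function.update_of_ne hij]
      exact hW.2.1 _ _ (hδ i hij)
  have huW : u ∈ W := hW.1 x hxW _ (hW.2.2.2 r hrW) (H.vreversible x u r hx)
  obtain ⟨b, hb⟩ := H.exists_mem_smul_of_mem_smul hcj hu
  exact hW.2.1 b u huW hb

theorem linDep_of_linDep_tail {m : ℕ} {β : Fin (m + 1) → V} (h : H.LinDep (Fin.tail β)) :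
    H.LinDep β := by
  obtain ⟨a, ⟨i, hi⟩, hθ⟩ := h
  refine ⟨Fin.cons K.zero a, ⟨i.succ, by rwa [Fin.cons_succ]⟩, ?_⟩
  rwa [lincomb_cons, H.zero_smul, singleton_vzero_setVadd]

theorem linDep_of_head_mem_HL (hsld : H.StronglyLeftDistrib) {m : ℕ} {β : Fin (m + 1) → V}
    (h : β 0 ∈ H.HL (Fin.tail β)) : H.LinDep β := by
  obtain ⟨c, hc⟩ := H.mem_HL_iff.1 h
  refine ⟨Fin.cons (K.neg K.one) c, ⟨0, by rw [Fin.cons_zero]; exact K.neg_one_ne_zero⟩, ?_⟩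
  rw [lincomb_cons]
  exact H.mem_setVadd.2 ⟨H.vneg (β 0), H.vneg_mem_smul_neg_one hsld _, β 0, hc,
    (H.vneg_spec _).2⟩

theorem mem_HL_append_left {m r : ℕ} (β : Fin m → V) (γ : Fin r → V) (i : Fin m) :
    β i ∈ H.HL (Fin.append β γ) := by
  simpa using H.mem_HL (Fin.append β γ) (Fin.castAdd r i)

theorem mem_HL_append_right {m r : ℕ} (β : Fin m → V) (γ : Fin r → V) (i : Fin r) :
    γ i ∈ H.HL (Fin.append β γ) := by
  simpa using H.mem_HL (Fin.append β γ) (Fin.natAdd m i)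

theorem exists_HL_subset_HL_append (hsld : H.StronglyLeftDistrib) {m r : ℕ}
    {β : Fin (m + 1) → V} (hβ : ¬ H.LinDep β) (γ : Fin r → V)
    (hγ : β 0 ∈ H.HL (Fin.append (Fin.tail β) γ)) :
    ∃ r', ∃ e : Fin r' → Fin r, r' + 1 = r ∧
      H.HL (Fin.append (Fin.tail β) γ) ⊆ H.HL (Fin.append β (γ ∘ e)) := by
  obtain ⟨c, hc⟩ := H.mem_HL_iff.1 hγ
  obtain ⟨j, hj⟩ : ∃ j, c (Fin.natAdd m j) ≠ K.zero := by
    by_contra! hzero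
    refine hβ (H.linDep_of_head_mem_HL hsld
      (H.lincomb_subset (H.isHypersubspace_HL hsld _) (fun i => ?_) hc))
    induction i using Fin.addCases with
    | left p =>
      rw [Fin.append_left]
      exact (H.isHypersubspace_HL hsld _).2.1 _ _ (H.mem_HL _ p)
    | right q =>
      rw [hzero q, H.zero_smul]
      exact Set.singleton_subset_iff.2 (H.vzero_mem_HL _)
  cases r with
  | zero => exact j.elim0
  | succ r =>
    refine ⟨r, j.succAbove, rfl, ?_⟩
    have hW := H.isHypersubspace_HL hsld (Fin.append β (γ ∘ j.succAbove))
    have hothers : ∀ i ≠ Fin.natAdd m j,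
        Fin.append (Fin.tail β) γ i ∈ H.HL (Fin.append β (γ ∘ j.succAbove)) := by
      intro i hi
      induction i using Fin.addCases with
      | left p =>
        rw [Fin.append_left]
        exact H.mem_HL_append_left β _ p.succ
      | right q =>
        obtain ⟨q', rfl⟩ := Fin.exists_succAbove_eq (fun h => hi (h ▸ rfl) : q ≠ j)
        rw [Fin.append_right]
        exact H.mem_HL_append_right β (γ ∘ j.succAbove) q'
    refine H.HL_subset hW fun i => ?_
    rcases eq_or_ne i (Fin.natAdd m j) with rfl | hi
    · exact H.mem_of_mem_lincomb hW hc (H.mem_HL_append_left β _ 0) hj hothers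
    · exact hothers i hi

theorem exists_HL_append_eq_univ (hsld : H.StronglyLeftDistrib) {n : ℕ} {α : Fin n → V}
    (hgen : H.HL α = Set.univ) {m : ℕ} (β : Fin m → V) (hβ : ¬ H.LinDep β) :
    ∃ r, ∃ g : Fin r → Fin n, m + r = n ∧ H.HL (Fin.append β (α ∘ g)) = Set.univ := by
  induction m with
  | zero =>
    refine ⟨n, id, Nat.zero_add n, Set.eq_univ_of_univ_subset ?_⟩
    rw [← hgen]
    exact H.HL_subset (H.isHypersubspace_HL hsld _) (H.mem_HL_append_right β α)
  | succ m ih =>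
    obtain ⟨r, g, hr, hg⟩ := ih (Fin.tail β) (fun h => hβ (H.linDep_of_linDep_tail h))
    obtain ⟨r', e, rfl, he⟩ :=
      H.exists_HL_subset_HL_append hsld hβ (α ∘ g) (hg ▸ Set.mem_univ _)
    exact ⟨r', g ∘ e, by omega, Set.eq_univ_of_univ_subset (hg ▸ he)⟩

end HypervectorSpace

/-- Replacement theorem: if `{α₁, ..., αₙ}` generates a strongly left distributive
hypervector space `V` and `{β₁, ..., βₘ}` is linearly independent, then `m ≤ n` and
`V` is generated by a set of the form `{β₁, ..., βₘ, α_{i₁}, ..., α_{i_{n−m}}}`. -/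
theorem HypervectorSpace.replacement {F : Type u} {V : Type v}
    {K : Hyperfield F} (H : HypervectorSpace F V K)
    (hsld : H.StronglyLeftDistrib) {n m : ℕ}
    (α : Fin n → V) (hgen : H.HL α = Set.univ)
    (β : Fin m → V) (hind : ¬ H.LinDep β) :
    m ≤ n ∧ ∃ g : Fin (n - m) → Fin n,
      H.HL (Fin.append β (α ∘ g)) = Set.univ := by
  obtain ⟨r, g, hr, hg⟩ := H.exists_HL_append_eq_univ hsld hgen β hind
  obtain rfl : r = n - m := by omega
  exact ⟨by omega, g, hg⟩
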